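/- Let Ω_n be the set of equi-n-squares and Σ_n the set of consecutive equi-n-squares. The probability that a uniformly random equi-n-square is consecutive satisfies |Σ_n|/|Ω_n| ∼ 4·n^{n+1}·(n²−n)!/(n²)! as n → ∞; that is, (|Σ_n|/|Ω_n|) · (n²)! / (4·n^{n+1}·(n²−n)!) tends to 1 as n → ∞. -/

import Mathlib

/-!
An equi-`n`-square is a map `Fin n × Fin n → Fin n` all of whose fibres have size `n`, and the
orbit–stabilizer theorem for `Perm (Fin n × Fin n)` counts these maps as `(n²)! / (n!)^n`;
prescribing values on some cells counts the completions in the same way. A square is consecutive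
iff it satisfies one of `4n` line conditions. Each condition fixes `n` cells with distinct values
and is met by exactly `K = (n² - n)! / ((n - 1)!)^n` equi-squares. Two distinct conditions either
contradict each other or fix at least `2n - 1` cells using every value at most twice, which leaves
at most `K / (n - 1)^(n - 2)` squares. Hence, by the union bound and the Bonferroni inequality,
`4nK - 16n²K / (n - 1)^(n - 2) ≤ |Σ_n| ≤ 4nK`, and `4nK / |Ω_n|` is exactly the asymptotic
expression of the theorem.
-/

open Nat Finset Filter

/-- An equi-`n`-square: an `n × n` array with entries in `Fin n` in which
every value appears exactly `n` times. -/
def IsEquiSquare (n : ℕ) (g : Fin n → Fin n → Fin n) : Prop :=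
  ∀ k : Fin n, Nat.card {p : Fin n × Fin n // g p.1 p.2 = k} = n

/-- Row `i` is consecutive (1-indexed: entry in column `j` is `j`). -/
def RowConsec {n : ℕ} (g : Fin n → Fin n → Fin n) (i : Fin n) : Prop :=
  ∀ j : Fin n, g i j = j

/-- Row `i` is reverse-consecutive (1-indexed: entry in column `j` is `n+1-j`). -/
def RowRevConsec {n : ℕ} (g : Fin n → Fin n → Fin n) (i : Fin n) : Prop :=
  ∀ j : Fin n, (g i j : ℕ) + (j : ℕ) + 1 = n

/-- Column `j` is consecutive (1-indexed: entry in row `i` is `i`). -/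
def ColConsec {n : ℕ} (g : Fin n → Fin n → Fin n) (j : Fin n) : Prop :=
  ∀ i : Fin n, g i j = i

/-- Column `j` is reverse-consecutive (1-indexed: entry in row `i` is `n+1-i`). -/
def ColRevConsec {n : ℕ} (g : Fin n → Fin n → Fin n) (j : Fin n) : Prop :=
  ∀ i : Fin n, (g i j : ℕ) + (i : ℕ) + 1 = n

/-- A consecutive equi-`n`-square: an equi-`n`-square with at least one consecutive or
reverse-consecutive row or column. -/
def IsConsecEquiSquare (n : ℕ) (g : Fin n → Fin n → Fin n) : Prop :=
  IsEquiSquare n g ∧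
    ((∃ i : Fin n, RowConsec g i ∨ RowRevConsec g i) ∨
      (∃ j : Fin n, ColConsec g j ∨ ColRevConsec g j))

section FiberCount

variable {α β : Type*}

lemma card_fiber_comp_equiv {δ : Type*} (ε : δ ≃ β) (f : β → α) (a : α) :
    Nat.card {y // f (ε y) = a} = Nat.card {b // f b = a} :=
  Nat.card_congr (ε.subtypeEquiv fun _ => Iff.rfl)

lemma card_fiber_eq_add_of_sum_equiv {γ δ : Type*} [Finite γ] [Finite δ] (ε : γ ⊕ δ ≃ β)
    (f : β → α) (a : α) :
    Nat.card {b // f b = a} =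
      Nat.card {x // f (ε (.inl x)) = a} + Nat.card {z // f (ε (.inr z)) = a} := by
  rw [← card_fiber_comp_equiv ε, Nat.card_congr Equiv.subtypeSum, Nat.card_sum]

variable [Fintype β]

lemma sum_card_fiber [Fintype α] (f : β → α) :
    ∑ a, Nat.card {b // f b = a} = Fintype.card β := by
  classical
  rw [← Nat.card_eq_fintype_card, ← Nat.card_congr (Equiv.sigmaFiberEquiv f), Nat.card_sigma]

open DomMulAct in
lemma orbit_domMulAct_perm (f : β → α) :
    MulAction.orbit (Equiv.Perm β)ᵈᵐᵃ f =
      {g | ∀ a, Nat.card {b // g b = a} = Nat.card {b // f b = a}} := by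
  ext g
  constructor
  · rintro ⟨σ, rfl⟩ a
    exact card_fiber_comp_equiv (mk.symm σ) f a
  · intro h
    have e : ∀ a, {b // g b = a} ≃ {b // f b = a} := fun a => (Finite.card_eq.1 (h a)).some
    exact ⟨mk (Equiv.ofFiberEquiv e), funext (Equiv.ofFiberEquiv_map e)⟩

variable [Fintype α]

lemma exists_card_fiber_eq (e : α → ℕ) (he : ∑ a, e a = Fintype.card β) :
    ∃ f : β → α, ∀ a, Nat.card {b // f b = a} = e a := by
  have ε : β ≃ Σ a, Fin (e a) := Fintype.equivOfCardEq (by simp [he])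
  refine ⟨fun b => (ε b).1, fun a => ?_⟩
  rw [← card_fiber_comp_equiv ε.symm]
  simp only [Equiv.apply_symm_apply]
  rw [Nat.card_congr (Equiv.sigmaSubtype a)]
  simp

theorem card_fiber_eq_mul_prod_factorial (e : α → ℕ) (he : ∑ a, e a = Fintype.card β) :
    Nat.card {f : β → α // ∀ a, Nat.card {b // f b = a} = e a} * ∏ a, (e a)! =
      (Fintype.card β)! := by
  classical
  obtain ⟨f, hf⟩ := exists_card_fiber_eq e he
  have hstab : Nat.card (MulAction.stabilizer (Equiv.Perm β)ᵈᵐᵃ f) =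
      Fintype.card {σ : Equiv.Perm β // f ∘ σ = f} :=
    (Nat.card_congr (Equiv.subtypeEquiv _ fun _ => DomMulAct.mem_stabilizer_iff)).trans
      Nat.card_eq_fintype_card
  have horbit := Nat.card_congr (MulAction.orbitProdStabilizerEquivGroup (Equiv.Perm β)ᵈᵐᵃ f)
  rw [Nat.card_prod, orbit_domMulAct_perm, hstab, DomMulAct.stabilizer_card,
    Nat.card_congr DomMulAct.mk.symm, Nat.card_perm] at horbit
  simp only [← Nat.card_eq_fintype_card, hf] at horbit ⊢
  exact horbit

theorem card_extend_fiber_eq_mul_prod_factorial {γ : Type*} [Fintype γ] {w : γ → β}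
    (hw : Function.Injective w) (u : γ → α) (e : α → ℕ) (he : ∑ a, e a = Fintype.card β)
    (hue : ∀ a, Nat.card {x // u x = a} ≤ e a) :
    Nat.card {f : β → α // (∀ x, f (w x) = u x) ∧ ∀ a, Nat.card {b // f b = a} = e a} *
        ∏ a, (e a - Nat.card {x // u x = a})! = (Fintype.card β - Fintype.card γ)! := by
  classical
  let S := {b // b ∉ Set.range w}
  let ε : γ ⊕ S ≃ β :=
    (Equiv.sumCongr (Equiv.ofInjective w hw) (Equiv.refl S)).trans (Equiv.sumCompl _)
  have hcard : Fintype.card γ + Fintype.card S = Fintype.card β := by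
    rw [← Fintype.card_sum]; exact Fintype.card_congr ε
  have hinl (x : γ) : ε.symm (w x) = .inl x := ε.symm_apply_eq.2 rfl
  have hinr (s : S) : ε.symm s = .inr s := ε.symm_apply_eq.2 rfl
  have hfiber (f : β → α) (a : α) : Nat.card {b // f b = a} =
      Nat.card {x // f (w x) = a} + Nat.card {s : S // f s = a} :=
    card_fiber_eq_add_of_sum_equiv ε f a
  let E : {f : β → α // (∀ x, f (w x) = u x) ∧ ∀ a, Nat.card {b // f b = a} = e a} ≃
      {h : S → α // ∀ a, Nat.card {s // h s = a} = e a - Nat.card {x // u x = a}} :=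
    { toFun f := ⟨fun s => f.1 s, fun a => by
        have := f.2.2 a
        simp only [hfiber, f.2.1] at this
        have := hue a
        show Nat.card {s : S // f.1 s = a} = _
        omega⟩
      invFun h := ⟨Sum.elim u h.1 ∘ ε.symm, fun x => by simp [hinl], fun a => by
        rw [hfiber]
        simp only [Function.comp_apply, hinl, hinr, Sum.elim_inl, Sum.elim_inr, h.2 a]
        have := hue a
        omega⟩
      left_inv f := by
        ext b
        obtain ⟨x | s, rfl⟩ := ε.surjective b
        · simp only [Function.comp_apply, Equiv.symm_apply_apply, Sum.elim_inl]
          exact (f.2.1 x).symm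
        · simp only [Function.comp_apply, Equiv.symm_apply_apply, Sum.elim_inr]
          rfl
      right_inv h := by
        ext s
        simp [hinr] }
  rw [Nat.card_congr E, card_fiber_eq_mul_prod_factorial, ← hcard, Nat.add_sub_cancel_left]
  rw [Finset.sum_tsub_distrib _ fun a _ => hue a, he, sum_card_fiber, ← hcard,
    Nat.add_sub_cancel_left]

end FiberCount

theorem Finset.sum_card_le_card_biUnion_add_sum_card_inter {ι α : Type*} [DecidableEq ι]
    [DecidableEq α] (s : Finset ι) (A : ι → Finset α) :
    ∑ i ∈ s, #(A i) ≤ #(s.biUnion A) + ∑ p ∈ s.offDiag, #(A p.1 ∩ A p.2) := by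
  induction s using Finset.induction_on with
  | empty => simp
  | insert j s hj ih =>
    have hunion : #(A j) + #(s.biUnion A) = #((insert j s).biUnion A) + #(A j ∩ s.biUnion A) := by
      rw [biUnion_insert, card_union_add_card_inter]
    have hinter : #(A j ∩ s.biUnion A) ≤ ∑ i ∈ s, #(A j ∩ A i) := by
      rw [inter_biUnion]
      exact card_biUnion_le
    have hpairs : ∑ p ∈ s.offDiag, #(A p.1 ∩ A p.2) + ∑ i ∈ s, #(A j ∩ A i) ≤
        ∑ p ∈ (insert j s).offDiag, #(A p.1 ∩ A p.2) := by
      have hdisj : Disjoint s.offDiag ({j} ×ˢ s) :=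
        disjoint_left.2 fun p hp hp' => hj (by
          rw [mem_product, mem_singleton] at hp'
          exact hp'.1 ▸ (mem_offDiag.1 hp).1)
      calc _ = ∑ p ∈ s.offDiag ∪ {j} ×ˢ s, #(A p.1 ∩ A p.2) := by
            rw [sum_union hdisj, sum_product, sum_singleton]
        _ ≤ _ := sum_le_sum_of_subset (by rw [offDiag_insert hj]; exact subset_union_left)
    rw [sum_insert hj]
    omega

section EquiSquare

variable {n : ℕ}

def HasValuesAt {γ : Type*} (w : γ → Fin n × Fin n) (u : γ → Fin n)
    (g : Fin n → Fin n → Fin n) : Prop :=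
  ∀ x, g (w x).1 (w x).2 = u x

theorem card_equiSquare_extend_mul {γ : Type*} [Fintype γ] {w : γ → Fin n × Fin n}
    (hw : Function.Injective w) (u : γ → Fin n) (hu : ∀ k, Nat.card {x // u x = k} ≤ n) :
    Nat.card {g // HasValuesAt w u g ∧ IsEquiSquare n g} *
      ∏ k, (n - Nat.card {x // u x = k})! = (n ^ 2 - Fintype.card γ)! := by
  have E : {g // HasValuesAt w u g ∧ IsEquiSquare n g} ≃
      {f : Fin n × Fin n → Fin n //
        (∀ x, f (w x) = u x) ∧ ∀ k, Nat.card {p // f p = k} = n} :=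
    (Equiv.curry _ _ _).symm.subtypeEquiv fun _ => Iff.rfl
  rw [Nat.card_congr E, card_extend_fiber_eq_mul_prod_factorial hw u _ (by simp) hu]
  simp [sq]

theorem card_equiSquare_mul : Nat.card {g // IsEquiSquare n g} * (n !) ^ n = (n ^ 2)! := by
  have h := card_equiSquare_extend_mul (n := n) (w := Empty.elim)
    (Function.injective_of_subsingleton _) Empty.elim (by simp)
  simpa [HasValuesAt] using h

theorem card_equiSquare_extend_mul_le {γ : Type*} [Fintype γ] {w : γ → Fin n × Fin n}
    (hw : Function.Injective w) (u : γ → Fin n) {m s : ℕ} (hmn : m ≤ n)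
    (hu : ∀ k, Nat.card {x // u x = k} ≤ m) (hs : s ≤ Fintype.card γ) :
    Nat.card {g // HasValuesAt w u g ∧ IsEquiSquare n g} *
      ((n - m)!) ^ n ≤ (n ^ 2 - s)! := by
  calc _ ≤ Nat.card {g // HasValuesAt w u g ∧ IsEquiSquare n g} *
        ∏ k, (n - Nat.card {x // u x = k})! := by
        gcongr
        simpa using Finset.pow_card_le_prod Finset.univ (fun k => (n - Nat.card {x // u x = k})!)
          (n - m)! fun k _ => Nat.factorial_le (Nat.sub_le_sub_left (hu k) n)
    _ = (n ^ 2 - Fintype.card γ)! := card_equiSquare_extend_mul hw u fun k => (hu k).trans hmn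
    _ ≤ (n ^ 2 - s)! := Nat.factorial_le (by omega)

end EquiSquare

lemma Fin.eq_rev_iff_val_add_val_add_one {n : ℕ} (a t : Fin n) :
    a = t.rev ↔ (a : ℕ) + t + 1 = n := by
  rw [Fin.ext_iff, Fin.val_rev]
  omega

/-- The condition `(isColumn, isReversed, index)`: row or column `index` is consecutive, or
reverse-consecutive. -/
abbrev ConsecLine (n : ℕ) := Bool × Bool × Fin n

namespace ConsecLine

variable {n : ℕ}

def cell : ConsecLine n → Fin n → Fin n × Fin n
  | (false, _, i) => fun t => (i, t)
  | (true, _, j) => fun t => (t, j)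

def value : ConsecLine n → Equiv.Perm (Fin n)
  | (_, false, _) => 1
  | (_, true, _) => Fin.revPerm

def Holds (c : ConsecLine n) (g : Fin n → Fin n → Fin n) : Prop :=
  HasValuesAt c.cell c.value g

lemma cell_injective (c : ConsecLine n) : Function.Injective c.cell := by
  obtain ⟨_ | _, _, _⟩ := c <;> intro t t' h <;> simpa [cell] using h

lemma card_fiber_value (c : ConsecLine n) (k : Fin n) : Nat.card {t // c.value t = k} = 1 := by
  rw [Nat.card_congr (Equiv.subtypeEquivRight fun _ => c.value.eq_symm_apply.symm)]
  simp

theorem card_holds_mul (c : ConsecLine n) :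
    Nat.card {g // c.Holds g ∧ IsEquiSquare n g} * ((n - 1)!) ^ n = (n ^ 2 - n)! := by
  have h := card_equiSquare_extend_mul c.cell_injective c.value
    fun k => (c.card_fiber_value k).trans_le k.pos
  simp only [c.card_fiber_value, Finset.prod_const, Finset.card_univ, Fintype.card_fin] at h
  exact h

lemma not_holds_and_holds_of_ne (hn : 2 ≤ n) {b r r' : Bool} (hr : r ≠ r') (i : Fin n)
    (g : Fin n → Fin n → Fin n) : ¬ (Holds (b, r, i) g ∧ Holds (b, r', i) g) := by
  rintro ⟨h, h'⟩
  have h0 := h ⟨0, by omega⟩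
  have h0' := h' ⟨0, by omega⟩
  cases b <;> cases r <;> cases r' <;> simp_all [cell, value, Fin.ext_iff] <;> omega

lemma eq_of_cell_mem_range {c c' : ConsecLine n} (h : (c.1, c.2.2) ≠ (c'.1, c'.2.2))
    {t t' : Fin n} (ht : c'.cell t ∈ Set.range c.cell) (ht' : c'.cell t' ∈ Set.range c.cell) :
    t = t' := by
  obtain ⟨b, r, i⟩ := c
  obtain ⟨b', r', i'⟩ := c'
  obtain ⟨s, hs⟩ := ht
  obtain ⟨s', hs'⟩ := ht'
  cases b <;> cases b' <;> simp_all [cell]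

theorem card_holds_holds_mul_le (hn : 2 ≤ n) {c c' : ConsecLine n} (hcc : c ≠ c') :
    Nat.card {g // (c.Holds g ∧ c'.Holds g) ∧ IsEquiSquare n g} * ((n - 2)!) ^ n ≤
      ((n - 1) ^ 2)! := by
  by_cases hline : (c.1, c.2.2) = (c'.1, c'.2.2)
  · obtain ⟨b, r, i⟩ := c
    obtain ⟨b', r', i'⟩ := c'
    obtain ⟨rfl, rfl⟩ := Prod.mk.inj hline
    have hr : r ≠ r' := by rintro rfl; exact hcc rfl
    have : IsEmpty {g // (Holds (b, r, i) g ∧ Holds (b, r', i) g) ∧ IsEquiSquare n g} :=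
      ⟨fun g => not_holds_and_holds_of_ne hn hr i g.1 g.2.1⟩
    simp
  -- Fix the whole line of `c` and the at least `n - 1` cells of the line of `c'` off it.
  let T := {t // c'.cell t ∉ Set.range c.cell}
  let w := Sum.elim c.cell fun t : T => c'.cell t
  let u := Sum.elim c.value fun t : T => c'.value t
  have hw : Function.Injective w :=
    c.cell_injective.sumElim (c'.cell_injective.comp Subtype.val_injective)
      fun s t h => t.2 ⟨s, h⟩
  have hu (k : Fin n) : Nat.card {x // u x = k} ≤ 2 := by
    have hT : Nat.card {t : T // c'.value t = k} ≤ 1 :=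
      Finite.card_le_one_iff_subsingleton.2
        ⟨fun a b => Subtype.ext (Subtype.ext (c'.value.injective (a.2.trans b.2.symm)))⟩
    rw [card_fiber_eq_add_of_sum_equiv (Equiv.refl _)]
    change Nat.card {t // c.value t = k} + Nat.card {t : T // c'.value t = k} ≤ 2
    rw [c.card_fiber_value]
    omega
  have hT : n - 1 ≤ Fintype.card T := by
    have : Fintype.card {t // c'.cell t ∈ Set.range c.cell} ≤ 1 :=
      Fintype.card_le_one_iff_subsingleton.2
        ⟨fun a b => Subtype.ext (eq_of_cell_mem_range hline a.2 b.2)⟩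
    rw [Fintype.card_subtype_compl, Fintype.card_fin]
    omega
  have hmono : Nat.card {g // (c.Holds g ∧ c'.Holds g) ∧ IsEquiSquare n g} ≤
      Nat.card {g // HasValuesAt w u g ∧ IsEquiSquare n g} :=
    Nat.card_le_card_of_injective (fun g => ⟨g.1, Sum.rec g.2.1.1 (fun t => g.2.1.2 t), g.2.2⟩)
      fun _ _ h => Subtype.ext (congrArg (fun g => g.1) h :)
  calc _ ≤ _ := Nat.mul_le_mul_right _ hmono
    _ ≤ (n ^ 2 - (2 * n - 1))! :=
      card_equiSquare_extend_mul_le hw u hn hu (by rw [Fintype.card_sum, Fintype.card_fin]; omega)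
    _ = ((n - 1) ^ 2)! := by
      obtain ⟨m, rfl⟩ : ∃ m, n = m + 1 := ⟨n - 1, by omega⟩
      rw [Nat.add_sub_cancel, add_sq]
      congr 1
      omega

open Classical in
noncomputable def squares (c : ConsecLine n) : Finset (Fin n → Fin n → Fin n) :=
  {g | c.Holds g ∧ IsEquiSquare n g}

lemma card_squares_mul (c : ConsecLine n) : #c.squares * ((n - 1)!) ^ n = (n ^ 2 - n)! := by
  classical
  rw [squares, ← Fintype.card_subtype, ← Nat.card_eq_fintype_card, card_holds_mul]

lemma sum_card_squares_mul :
    (∑ c : ConsecLine n, #c.squares) * ((n - 1)!) ^ n = 4 * n * (n ^ 2 - n)! := by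
  simp only [Finset.sum_mul, card_squares_mul, Finset.sum_const, Finset.card_univ,
    Fintype.card_prod, Fintype.card_bool, Fintype.card_fin, smul_eq_mul]
  ring

lemma card_squares_inter_mul_le (hn : 2 ≤ n) {c c' : ConsecLine n} (hcc : c ≠ c') :
    #(c.squares ∩ c'.squares) * (n - 1) ^ (n - 2) * ((n - 1)!) ^ n ≤ (n ^ 2 - n)! := by
  classical
  have hinter : c.squares ∩ c'.squares =
      ({g | (c.Holds g ∧ c'.Holds g) ∧ IsEquiSquare n g} : Finset _) := by
    ext g
    simp only [squares, Finset.mem_inter, Finset.mem_filter, Finset.mem_univ, true_and]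
    tauto
  have hpair := card_holds_holds_mul_le hn hcc
  rw [Nat.card_eq_fintype_card, Fintype.card_subtype, ← hinter] at hpair
  obtain ⟨m, rfl⟩ : ∃ m, n = m + 2 := ⟨n - 2, by omega⟩
  simp only [Nat.add_sub_cancel, show m + 2 - 1 = m + 1 by omega] at hpair ⊢
  calc _ = #(c.squares ∩ c'.squares) * m ! ^ (m + 2) * ((m + 1) ^ 2) ^ (m + 1) := by
        rw [Nat.factorial_succ, mul_pow, ← pow_mul]
        ring
    _ ≤ ((m + 1) ^ 2)! * ((m + 1) ^ 2) ^ ((m + 1) ^ 2 + (m + 1) - (m + 1) ^ 2) := by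
        rw [Nat.add_sub_cancel_left]
        gcongr
    _ ≤ ((m + 1) ^ 2 + (m + 1))! := Nat.factorial_mul_pow_sub_le_factorial (by omega)
    _ = ((m + 2) ^ 2 - (m + 2))! := by
        congr 1
        exact (Nat.sub_eq_of_eq_add (by ring)).symm

lemma sum_card_squares_inter_mul_le (hn : 3 ≤ n) :
    (∑ p ∈ (univ : Finset (ConsecLine n)).offDiag, #(p.1.squares ∩ p.2.squares)) *
      2 ^ (n - 2) * ((n - 1)!) ^ n ≤ 16 * n ^ 2 * (n ^ 2 - n)! := by
  calc _ = ∑ p ∈ (univ : Finset (ConsecLine n)).offDiag,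
        #(p.1.squares ∩ p.2.squares) * 2 ^ (n - 2) * ((n - 1)!) ^ n := by
        simp only [sum_mul]
    _ ≤ ∑ _p ∈ (univ : Finset (ConsecLine n)).offDiag, (n ^ 2 - n)! := by
        refine sum_le_sum fun p hp => le_trans ?_
          (card_squares_inter_mul_le (by omega) (mem_offDiag.1 hp).2.2)
        gcongr
        omega
    _ ≤ 16 * n ^ 2 * (n ^ 2 - n)! := by
        rw [sum_const, smul_eq_mul, offDiag_card, Finset.card_univ]
        gcongr
        simp only [Fintype.card_prod, Fintype.card_bool, Fintype.card_fin]
        nlinarith [Nat.sub_le (2 * (2 * n) * (2 * (2 * n))) (2 * (2 * n))]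

end ConsecLine

lemma isConsecEquiSquare_iff {n : ℕ} (g : Fin n → Fin n → Fin n) :
    IsConsecEquiSquare n g ↔ IsEquiSquare n g ∧ ∃ c : ConsecLine n, c.Holds g := by
  simp only [IsConsecEquiSquare, Prod.exists, Bool.exists_bool, ConsecLine.Holds, HasValuesAt,
    ConsecLine.cell,
    ConsecLine.value, RowConsec, RowRevConsec, ColConsec, ColRevConsec, Equiv.Perm.one_apply,
    Fin.revPerm_apply, Fin.eq_rev_iff_val_add_val_add_one, exists_or]
  tauto

noncomputable def consecRatio (n : ℕ) : ℝ :=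
  ((Nat.card {g : Fin n → Fin n → Fin n // IsConsecEquiSquare n g} : ℝ) /
      (Nat.card {g : Fin n → Fin n → Fin n // IsEquiSquare n g} : ℝ)) *
    ((n ^ 2)! : ℝ) / (4 * (n : ℝ) ^ (n + 1) * ((n ^ 2 - n)! : ℝ))

section ConsecRatio

variable {n : ℕ}

lemma card_consecEquiSquare_eq_card_biUnion :
    Nat.card {g // IsConsecEquiSquare n g} =
      #((univ : Finset (ConsecLine n)).biUnion ConsecLine.squares) := by
  classical
  rw [Nat.card_eq_fintype_card, Fintype.card_subtype]
  congr 1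
  ext g
  simp only [ConsecLine.squares, isConsecEquiSquare_iff, mem_filter, mem_univ, true_and,
    mem_biUnion]
  tauto

lemma card_consecEquiSquare_mul_le :
    Nat.card {g // IsConsecEquiSquare n g} * ((n - 1)!) ^ n ≤ 4 * n * (n ^ 2 - n)! := by
  classical
  rw [card_consecEquiSquare_eq_card_biUnion, ← ConsecLine.sum_card_squares_mul]
  gcongr
  exact card_biUnion_le

lemma le_card_consecEquiSquare_mul (hn : 3 ≤ n) :
    4 * n * (n ^ 2 - n)! * 2 ^ (n - 2) ≤
      Nat.card {g // IsConsecEquiSquare n g} * ((n - 1)!) ^ n * 2 ^ (n - 2) +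
        16 * n ^ 2 * (n ^ 2 - n)! := by
  classical
  set R := ∑ p ∈ (univ : Finset (ConsecLine n)).offDiag, #(p.1.squares ∩ p.2.squares)
  set N := #((univ : Finset (ConsecLine n)).biUnion ConsecLine.squares)
  rw [card_consecEquiSquare_eq_card_biUnion, ← ConsecLine.sum_card_squares_mul]
  calc _ ≤ (N + R) * ((n - 1)!) ^ n * 2 ^ (n - 2) := by
        gcongr
        exact sum_card_le_card_biUnion_add_sum_card_inter univ ConsecLine.squares
    _ = N * ((n - 1)!) ^ n * 2 ^ (n - 2) + R * 2 ^ (n - 2) * ((n - 1)!) ^ n := by ring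
    _ ≤ _ := Nat.add_le_add_left (ConsecLine.sum_card_squares_inter_mul_le hn) _

lemma consecRatio_eq (hn : 1 ≤ n) :
    consecRatio n = ((Nat.card {g // IsConsecEquiSquare n g} * ((n - 1)!) ^ n : ℕ) : ℝ) /
      ((4 * n * (n ^ 2 - n)! : ℕ) : ℝ) := by
  have hΩ : (Nat.card {g // IsEquiSquare n g} : ℝ) * (n ! : ℝ) ^ n = (n ^ 2)! := by
    exact_mod_cast card_equiSquare_mul
  have hΩ0 : (Nat.card {g // IsEquiSquare n g} : ℝ) ≠ 0 := Nat.cast_ne_zero.2 fun h0 =>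
    (n ^ 2).factorial_ne_zero (by rw [← card_equiSquare_mul, h0, zero_mul])
  rw [consecRatio, ← hΩ, ← Nat.mul_factorial_pred (by omega : n ≠ 0)]
  push_cast
  field_simp
  ring

lemma consecRatio_le_one (hn : 1 ≤ n) : consecRatio n ≤ 1 := by
  rw [consecRatio_eq hn, div_le_one (by positivity)]
  exact_mod_cast card_consecEquiSquare_mul_le

lemma one_sub_le_consecRatio (hn : 3 ≤ n) : 1 - 16 * n * (1 / 2) ^ n ≤ consecRatio n := by
  have h : ((4 * n * (n ^ 2 - n)! * 2 ^ (n - 2) : ℕ) : ℝ) ≤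
      ((Nat.card {g // IsConsecEquiSquare n g} * ((n - 1)!) ^ n * 2 ^ (n - 2) +
        16 * n ^ 2 * (n ^ 2 - n)! : ℕ) : ℝ) := by
    exact_mod_cast le_card_consecEquiSquare_mul hn
  have hpow : (1 / 2 : ℝ) ^ n = 1 / (4 * 2 ^ (n - 2)) := by
    rw [one_div_pow, show (4 : ℝ) = 2 ^ 2 by norm_num, ← pow_add,
      Nat.add_sub_cancel' (by omega : 2 ≤ n)]
  rw [consecRatio_eq (by omega), le_div_iff₀ (by positivity), hpow]
  push_cast at h ⊢
  set N := (Nat.card {g // IsConsecEquiSquare n g} : ℝ) * ((n - 1)! : ℝ) ^ n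
  set M := ((n ^ 2 - n)! : ℝ)
  set P := (2 : ℝ) ^ (n - 2)
  have hP : 0 < P := by positivity
  calc (1 - 16 * n * (1 / (4 * P))) * (4 * n * M) = (4 * n * M * P - 16 * n ^ 2 * M) / P := by
        field_simp
    _ ≤ N * P / P := by gcongr; linarith
    _ = N := by field_simp

end ConsecRatio

/-- `|Σ_n|/|Ω_n| ∼ 4·n^{n+1}·(n²−n)!/(n²)!` as `n → ∞`: the ratio tends to `1`. -/
theorem prob_consecEquiSquares_asymp :
    Filter.Tendsto
      (fun n : ℕ =>
        ((Nat.card {g : Fin n → Fin n → Fin n // IsConsecEquiSquare n g} : ℝ) /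
            (Nat.card {g : Fin n → Fin n → Fin n // IsEquiSquare n g} : ℝ)) *
          ((n ^ 2)! : ℝ) / (4 * (n : ℝ) ^ (n + 1) * ((n ^ 2 - n)! : ℝ)))
      Filter.atTop (nhds 1) := by
  change Tendsto consecRatio atTop (nhds 1)
  have hlower : Tendsto (fun n : ℕ => 1 - 16 * (n : ℝ) * (1 / 2) ^ n) atTop (nhds 1) := by
    have h := ((tendsto_self_mul_const_pow_of_lt_one (r := 1 / 2) (by norm_num)
      (by norm_num)).const_mul 16).const_sub 1
    simpa only [mul_zero, sub_zero, ← mul_assoc] using h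
  refine tendsto_of_tendsto_of_tendsto_of_le_of_le' hlower tendsto_const_nhds ?_ ?_
  · filter_upwards [eventually_ge_atTop 3] with n hn using one_sub_le_consecRatio hn
  · filter_upwards [eventually_ge_atTop 1] with n hn using consecRatio_le_one hn
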